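/- arXiv:math/0511484 — 3 statements merged into one kernel-verified Lean document; each statement's English description precedes it below -/
import Mathlib

section
/- The twisted q-Bernoulli polynomials satisfy the distribution relation: for all n ≥ 1 and positive integers d, β^{(h)}_{n,ξ}(x,q) = [d]_q^{n-1} Σ_{a=0}^{d-1} ξ^a q^{ha} β^{(h)}_{n,ξ^d}((a+x)/d, q^d), where β^{(h)}_{m,ξ}(x,q) is defined by the closed formula (1/(1-q)^{m-1}) Σ_{k=0}^m C(m,k) q^{xk} (-1)^k (k+h)/(1 - q^{h+k} ξ). -/
open Finset

lemma geom_aux (r X : ℂ) (d : ℕ) (h1 : 1 - r ≠ 0) (h2 : 1 - r ^ d ≠ 0) :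
    (∑ a ∈ range d, r ^ a) * (X / (1 - r ^ d)) = X / (1 - r) := by
  rw [geom_sum_eq (fun hr1 => h1 (by rw [hr1]; ring)) d,
    show (r ^ d - 1) / (r - 1) = (1 - r ^ d) / (1 - r) by
      rw [← neg_sub, ← neg_sub r 1, neg_div, div_neg],
    div_mul_div_comm, mul_comm (1 - r) (1 - r ^ d), mul_div_mul_left X _ h2]

/-- Distribution relation for the twisted `q`-Bernoulli polynomials (closed formula):
`β^{(h)}_{n,ξ}(x,q) = [d]_q^{n-1} Σ_{a=0}^{d-1} ξ^a q^{ha} β^{(h)}_{n,ξ^d}((a+x)/d, q^d)`.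
Here `L` is a fixed logarithm of `q` (`exp L = q`) and `q^z := exp (z L)`,
`(q^d)^w := exp (w (d L))`. -/
theorem twisted_q_bernoulli_distribution (q L ξ : ℂ) (hL : Complex.exp L = q)
    (hq0 : 0 < ‖q‖) (hq1 : ‖q‖ < 1) (hξ : ‖ξ‖ ≤ 1)
    (h : ℤ) (n d : ℕ) (hn : 1 ≤ n) (hd : 1 ≤ d) (x : ℝ) (hx : 0 ≤ x)
    (hden : ∀ k : ℕ, k ≤ n →
      1 - q ^ (h + (k : ℤ)) * ξ ≠ 0 ∧ 1 - q ^ ((d : ℤ) * (h + (k : ℤ))) * ξ ^ d ≠ 0) :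
    (1 / (1 - q) ^ (n - 1)) * ∑ k ∈ range (n + 1),
        (n.choose k : ℂ) * Complex.exp (((x : ℂ) * (k : ℂ)) * L) * (-1) ^ k *
          ((k : ℂ) + (h : ℂ)) / (1 - q ^ (h + (k : ℤ)) * ξ) =
      ((1 - q ^ d) / (1 - q)) ^ (n - 1) *
        ∑ a ∈ range d, ξ ^ a * q ^ (h * (a : ℤ)) *
          ((1 / (1 - q ^ d) ^ (n - 1)) * ∑ k ∈ range (n + 1),
            (n.choose k : ℂ) *
              Complex.exp ((((a : ℂ) + (x : ℂ)) / (d : ℂ) * (k : ℂ)) * ((d : ℂ) * L)) *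
              (-1) ^ k * ((k : ℂ) + (h : ℂ)) /
                (1 - q ^ ((d : ℤ) * (h + (k : ℤ))) * ξ ^ d)) := by
  have hq_ne : q ≠ 0 := hL ▸ Complex.exp_ne_zero L
  have hd0 : (d : ℂ) ≠ 0 := Nat.cast_ne_zero.mpr (by omega)
  have h1q : (1 : ℂ) - q ≠ 0 := by
    intro hq; rw [sub_eq_zero] at hq
    rw [← hq] at hq1; simp at hq1
  have h1qd : (1 : ℂ) - q ^ d ≠ 0 := by
    intro hq; rw [sub_eq_zero] at hq
    have : ‖q ^ d‖ < 1 := by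
      rw [norm_pow]; exact pow_lt_one₀ (norm_nonneg q) hq1 (by omega)
    rw [← hq] at this; simp at this
  -- key pointwise identity
  have key : ∀ k ∈ range (n + 1),
      (n.choose k : ℂ) * Complex.exp (((x : ℂ) * (k : ℂ)) * L) * (-1) ^ k *
          ((k : ℂ) + (h : ℂ)) / (1 - q ^ (h + (k : ℤ)) * ξ) =
        ∑ a ∈ range d, ξ ^ a * q ^ (h * (a : ℤ)) *
          ((n.choose k : ℂ) *
            Complex.exp ((((a : ℂ) + (x : ℂ)) / (d : ℂ) * (k : ℂ)) * ((d : ℂ) * L)) *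
            (-1) ^ k * ((k : ℂ) + (h : ℂ)) /
              (1 - q ^ ((d : ℤ) * (h + (k : ℤ))) * ξ ^ d)) := by
    intro k hk
    rw [mem_range] at hk
    obtain ⟨hD1, hDd⟩ := hden k (by omega)
    set r : ℂ := q ^ (h + (k : ℤ)) * ξ with hr
    have hrd : r ^ d = q ^ ((d : ℤ) * (h + (k : ℤ))) * ξ ^ d := by
      rw [hr, mul_pow, ← zpow_natCast (q ^ (h + (k : ℤ))), ← zpow_mul,
        mul_comm (h + (k : ℤ)) (d : ℤ)]
    have hstep : ∀ a ∈ range d,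
        ξ ^ a * q ^ (h * (a : ℤ)) *
          ((n.choose k : ℂ) *
            Complex.exp ((((a : ℂ) + (x : ℂ)) / (d : ℂ) * (k : ℂ)) * ((d : ℂ) * L)) *
            (-1) ^ k * ((k : ℂ) + (h : ℂ)) /
              (1 - q ^ ((d : ℤ) * (h + (k : ℤ))) * ξ ^ d)) =
        r ^ a * (((n.choose k : ℂ) * Complex.exp (((x : ℂ) * (k : ℂ)) * L) * (-1) ^ k *
          ((k : ℂ) + (h : ℂ))) / (1 - r ^ d)) := by
      intro a _
      have he1 : (((a : ℂ) + (x : ℂ)) / (d : ℂ) * (k : ℂ)) * ((d : ℂ) * L) =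
          ((a : ℂ) * (k : ℂ)) * L + ((x : ℂ) * (k : ℂ)) * L := by
        field_simp
      have he2 : Complex.exp (((a : ℂ) * (k : ℂ)) * L) = q ^ (a * k) := by
        rw [← hL, ← Complex.exp_nat_mul]
        congr 1
        push_cast; ring
      have hq3 : ξ ^ a * q ^ (h * (a : ℤ)) * q ^ (a * k) = r ^ a := by
        rw [hr, mul_pow, ← zpow_natCast (q ^ (h + (k : ℤ))), ← zpow_mul,
          ← zpow_natCast q (a * k), mul_assoc, ← zpow_add₀ hq_ne,
          show h * (a : ℤ) + ((a * k : ℕ) : ℤ) = (h + (k : ℤ)) * (a : ℤ) by push_cast; ring,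
          mul_comm]
      rw [he1, Complex.exp_add, he2, hrd, ← hq3]
      ring
    rw [sum_congr rfl hstep, ← sum_mul, geom_aux r _ d hD1 (by rw [hrd]; exact hDd)]
  rw [sum_congr rfl key, sum_comm]
  have hpull : ∀ a ∈ range d,
      ξ ^ a * q ^ (h * (a : ℤ)) *
        ((1 / (1 - q ^ d) ^ (n - 1)) * ∑ k ∈ range (n + 1),
          (n.choose k : ℂ) *
            Complex.exp ((((a : ℂ) + (x : ℂ)) / (d : ℂ) * (k : ℂ)) * ((d : ℂ) * L)) *
            (-1) ^ k * ((k : ℂ) + (h : ℂ)) /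
              (1 - q ^ ((d : ℤ) * (h + (k : ℤ))) * ξ ^ d)) =
      (1 / (1 - q ^ d) ^ (n - 1)) * ∑ k ∈ range (n + 1),
        ξ ^ a * q ^ (h * (a : ℤ)) *
          ((n.choose k : ℂ) *
            Complex.exp ((((a : ℂ) + (x : ℂ)) / (d : ℂ) * (k : ℂ)) * ((d : ℂ) * L)) *
            (-1) ^ k * ((k : ℂ) + (h : ℂ)) /
              (1 - q ^ ((d : ℤ) * (h + (k : ℤ))) * ξ ^ d)) := by
    intro a _
    simp only [mul_sum]
    refine sum_congr rfl fun k _ => by ring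
  rw [sum_congr rfl hpull, ← mul_sum, ← mul_assoc]
  congr 1
  rw [div_pow]
  field_simp
end

section
/- Let ξ ≠ 1 be a complex number and define twisted Bernoulli polynomials by e^{xt} t/(ξ e^t - 1) = Σ_{n≥0} B_{n,ξ}(x) t^n/n!. Then for n ≥ 1 and any positive integer d with ξ^d ≠ 1: B_{n,ξ}(x) = d^{n-1} Σ_{a=0}^{d-1} ξ^a B_{n,ξ^d}((a+x)/d). -/
open Finset PowerSeries

/-- Distribution relation for twisted Bernoulli polynomials:
`B_{n,ξ}(x) = d^{n-1} Σ_{a=0}^{d-1} ξ^a B_{n,ξ^d}((a+x)/d)` for `n ≥ 1`, `d ≥ 1`,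
where for each twist `η ≠ 1` the polynomials are given by
`e^{xt} t = (η e^t - 1) Σ_n B_{n,η}(x) t^n/n!`. -/
theorem twisted_bernoulli_poly_distribution (ξ : ℂ) (hξ : ξ ≠ 1) (d : ℕ) (hd : 1 ≤ d)
    (hξd : ξ ^ d ≠ 1) (B : ℂ → ℂ → ℕ → ℂ)
    (hB : ∀ η : ℂ, η ≠ 1 → ∀ x : ℂ,
      PowerSeries.rescale x (PowerSeries.exp ℂ) * PowerSeries.X =
        (PowerSeries.C η * PowerSeries.exp ℂ - 1) *
          PowerSeries.mk (fun n => B η x n / (n.factorial : ℂ)))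
    (n : ℕ) (hn : 1 ≤ n) (x : ℂ) :
    B ξ x n = (d : ℂ) ^ (n - 1) *
      ∑ a ∈ range d, ξ ^ a * B (ξ ^ d) (((a : ℂ) + x) / (d : ℂ)) n := by
  have hd0 : (d : ℂ) ≠ 0 := Nat.cast_ne_zero.mpr (by omega)
  set E : ℂ⟦X⟧ := PowerSeries.exp ℂ with hE
  set F : ℂ⟦X⟧ := PowerSeries.mk (fun n => B ξ x n / (n.factorial : ℂ)) with hF
  set G : ℕ → ℂ⟦X⟧ := fun a =>
    PowerSeries.mk (fun n => B (ξ ^ d) (((a : ℂ) + x) / (d : ℂ)) n / (n.factorial : ℂ)) with hG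
  set S : ℂ⟦X⟧ := ∑ a ∈ range d, C ξ ^ a * E ^ a with hS
  -- telescoping identity
  have hStel : (C ξ * E - 1) * S = C ξ ^ d * E ^ d - 1 := by
    rw [hS, mul_sum]
    have h := Finset.sum_range_sub (f := fun a => C ξ ^ a * E ^ a) d
    simp only [pow_zero, one_mul] at h
    rw [← h]
    refine Finset.sum_congr rfl fun a _ => ?_
    ring
  -- the rescaled identities
  have key : ∀ a ∈ range d,
      rescale (x : ℂ) E * (C (d : ℂ) * X) * (C ξ ^ a * E ^ a) =
        (C ξ ^ d * E ^ d - 1) * (C ξ ^ a * rescale (d : ℂ) (G a)) := by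
    intro a _
    have h2 := hB (ξ ^ d) hξd (((a : ℂ) + x) / (d : ℂ))
    have h3 := congrArg (rescale ((d : ℕ) : ℂ)) h2
    rw [map_mul, map_mul, map_sub, map_one, rescale_rescale, rescale_X] at h3
    have hdx : ((a : ℂ) + x) / (d : ℂ) * (d : ℂ) = (a : ℂ) + x := by
      field_simp
    rw [hdx] at h3
    have hax : rescale ((a : ℂ) + x) E = rescale ((a : ℕ) : ℂ) E * rescale x E :=
      (exp_mul_exp_eq_exp_add _ _).symm
    have hrC : rescale ((d : ℕ) : ℂ) (C (ξ ^ d)) = C (ξ ^ d) := by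
      ext m
      simp only [PowerSeries.coeff_rescale, PowerSeries.coeff_C]
      split <;> simp_all
    rw [map_mul (rescale ((d : ℕ) : ℂ)), hrC] at h3
    rw [hax, ← exp_pow_eq_rescale_exp a, ← exp_pow_eq_rescale_exp d, map_pow] at h3
    linear_combination (C ξ ^ a) * h3
  have hsum := Finset.sum_congr rfl key
  rw [← mul_sum, ← hS, ← Finset.mul_sum] at hsum
  set H : ℂ⟦X⟧ := ∑ a ∈ range d, C ξ ^ a * rescale (d : ℂ) (G a) with hH
  have h1 := hB ξ hξ x
  rw [← hF] at h1
  -- derive C d * F = H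
  have hmain : C (d : ℂ) * F = H := by
    have hne : (C ξ ^ d * E ^ d - 1 : ℂ⟦X⟧) ≠ 0 := by
      intro h0
      have := congrArg (PowerSeries.constantCoeff) h0
      simp [hE, PowerSeries.exp, PowerSeries.constantCoeff_mk] at this
      exact hξd (by linear_combination this)
    refine mul_left_cancel₀ hne ?_
    linear_combination hsum - (C ((d : ℕ) : ℂ) * F) * hStel - (C ((d : ℕ) : ℂ) * S) * h1
  -- take coefficient n
  have hc := congrArg (PowerSeries.coeff n) hmain
  have hfac : (n.factorial : ℂ) ≠ 0 := Nat.cast_ne_zero.mpr n.factorial_ne_zero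
  rw [PowerSeries.coeff_C_mul, hH, map_sum] at hc
  simp only [hF, PowerSeries.coeff_mk, ← map_pow,
    PowerSeries.coeff_C_mul, PowerSeries.coeff_rescale, hG, PowerSeries.coeff_mk] at hc
  -- hc : d * (B ξ x n / n!) = Σ ξ^a * (d^n * (B .. n / n!))
  have hdpow : (d : ℂ) ^ n = (d : ℂ) ^ (n - 1) * (d : ℂ) := by
    conv_lhs => rw [show n = (n - 1) + 1 by omega]
    rw [pow_succ]
  have hc' : ((d : ℂ) * B ξ x n) / (n.factorial : ℂ) =
      (∑ a ∈ range d, ξ ^ a * (d : ℂ) ^ n * B (ξ ^ d) (((a : ℂ) + x) / (d : ℂ)) n) /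
        (n.factorial : ℂ) := by
    rw [Finset.sum_div, mul_div_assoc]
    rw [hc]
    exact Finset.sum_congr rfl fun a _ => by ring
  have hc2 : (d : ℂ) * B ξ x n =
      ∑ a ∈ range d, ξ ^ a * (d : ℂ) ^ n * B (ξ ^ d) (((a : ℂ) + x) / (d : ℂ)) n := by
    have h5 := congrArg (fun z : ℂ => z * (n.factorial : ℂ)) hc'
    simpa only [div_mul_cancel₀ _ hfac] using h5
  refine mul_left_cancel₀ hd0 ?_
  rw [hc2, Finset.mul_sum, Finset.mul_sum]
  exact Finset.sum_congr rfl fun a _ => by rw [hdpow]; ring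
end

section
/- Let p be prime, n ≥ 1, and for each N ≥ 0 let μ(a + p^N ℤ_p) := [p^N]_q^{n-1} q^{ha} ξ^a β^{(h)}_{n, ξ^{p^N}}(a/p^N, q^{p^N}) where β is given by its closed formula. Then μ satisfies the distribution (compatibility) relation: Σ_{i=0}^{p-1} μ(a + i p^N + p^{N+1} ℤ_p) = μ(a + p^N ℤ_p), for all 0 ≤ a < p^N. -/
open Finset

/-- `μ(a + p^N ℤ_p) := [p^N]_q^{n-1} q^{ha} ξ^a β^{(h)}_{n, ξ^{p^N}}(a/p^N, q^{p^N})`,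
where `β^{(h)}_{n,η}(x,Q) = (1/(1-Q)^{n-1}) Σ_{k=0}^n C(n,k) Q^{xk} (-1)^k (k+h)/(1-Q^{h+k}η)`
is given by its closed formula; here `(q^{p^N})^{(a/p^N)k} = q^{ak}`. -/
noncomputable def padicTwistedMu (p : ℕ) [Fact p.Prime] (q ξ : ℚ_[p]) (h : ℤ)
    (n N a : ℕ) : ℚ_[p] :=
  ((1 - q ^ p ^ N) / (1 - q)) ^ (n - 1) * q ^ (h * (a : ℤ)) * ξ ^ a *
    ((1 / (1 - q ^ p ^ N) ^ (n - 1)) * ∑ k ∈ range (n + 1),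
      (n.choose k : ℚ_[p]) * q ^ (a * k) * (-1) ^ k * ((k : ℚ_[p]) + (h : ℚ_[p])) /
        (1 - (q ^ p ^ N) ^ (h + (k : ℤ)) * ξ ^ p ^ N))

/-- Normal form of `padicTwistedMu` when `1 - q^{p^M} ≠ 0`. -/
lemma padicTwistedMu_eq (p : ℕ) [Fact p.Prime] (q ξ : ℚ_[p]) (h : ℤ)
    (n M b : ℕ) (hM : (1:ℚ_[p]) - q ^ p ^ M ≠ 0) :
    padicTwistedMu p q ξ h n M b = (1 / (1 - q)) ^ (n - 1) *
      ∑ k ∈ range (n + 1),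
        (n.choose k : ℚ_[p]) * (-1) ^ k * ((k : ℚ_[p]) + (h : ℚ_[p])) *
          (q ^ (h * (b : ℤ)) * ξ ^ b * q ^ (b * k)) /
          (1 - (q ^ p ^ M) ^ (h + (k : ℤ)) * ξ ^ p ^ M) := by
  unfold padicTwistedMu
  have hpow : ((1 - q ^ p ^ M) / (1 - q)) ^ (n - 1) * (1 / (1 - q ^ p ^ M) ^ (n - 1))
      = (1 / (1 - q)) ^ (n - 1) := by
    rw [one_div_pow, div_pow, div_mul_div_comm, mul_one,
      mul_comm ((1 - q) ^ (n - 1)), ← div_div, div_self (pow_ne_zero _ hM)]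
  calc ((1 - q ^ p ^ M) / (1 - q)) ^ (n - 1) * q ^ (h * (b : ℤ)) * ξ ^ b *
        ((1 / (1 - q ^ p ^ M) ^ (n - 1)) * ∑ k ∈ range (n + 1),
          (n.choose k : ℚ_[p]) * q ^ (b * k) * (-1) ^ k * ((k : ℚ_[p]) + (h : ℚ_[p])) /
            (1 - (q ^ p ^ M) ^ (h + (k : ℤ)) * ξ ^ p ^ M))
      = (((1 - q ^ p ^ M) / (1 - q)) ^ (n - 1) * (1 / (1 - q ^ p ^ M) ^ (n - 1))) *
        (q ^ (h * (b : ℤ)) * ξ ^ b * ∑ k ∈ range (n + 1),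
          (n.choose k : ℚ_[p]) * q ^ (b * k) * (-1) ^ k * ((k : ℚ_[p]) + (h : ℚ_[p])) /
            (1 - (q ^ p ^ M) ^ (h + (k : ℤ)) * ξ ^ p ^ M)) := by ring
    _ = _ := by
        rw [hpow]
        congr 1
        rw [Finset.mul_sum]
        refine Finset.sum_congr rfl fun k _ => ?_
        ring

/-- Compatibility (distribution) relation for the `p`-adic generalized twisted
`q`-Bernoulli distribution: `Σ_{i=0}^{p-1} μ(a + i p^N + p^{N+1} ℤ_p) = μ(a + p^N ℤ_p)`. -/
theorem padicTwistedMu_compatible (p : ℕ) [Fact p.Prime] (q ξ : ℚ_[p])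
    (hq0 : q ≠ 0) (hq1 : q ≠ 1) (h : ℤ) (n : ℕ) (hn : 1 ≤ n)
    (hξ : ∃ r : ℕ, ξ ^ p ^ r = 1) (N : ℕ)
    (hqN : q ^ p ^ N ≠ 1) (hqN1 : q ^ p ^ (N + 1) ≠ 1)
    (hden : ∀ k : ℕ, k ≤ n →
      1 - (q ^ p ^ N) ^ (h + (k : ℤ)) * ξ ^ p ^ N ≠ 0 ∧
      1 - (q ^ p ^ (N + 1)) ^ (h + (k : ℤ)) * ξ ^ p ^ (N + 1) ≠ 0)
    (a : ℕ) (ha : a < p ^ N) :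
    ∑ i ∈ range p, padicTwistedMu p q ξ h n (N + 1) (a + i * p ^ N) =
      padicTwistedMu p q ξ h n N a := by
  have hQN : (1:ℚ_[p]) - q ^ p ^ N ≠ 0 := sub_ne_zero.mpr (Ne.symm hqN)
  have hQN1 : (1:ℚ_[p]) - q ^ p ^ (N + 1) ≠ 0 := sub_ne_zero.mpr (Ne.symm hqN1)
  have hqpN : q ^ p ^ N ≠ 0 := pow_ne_zero _ hq0
  rw [padicTwistedMu_eq p q ξ h n N a hQN]
  calc ∑ i ∈ range p, padicTwistedMu p q ξ h n (N + 1) (a + i * p ^ N)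
      = (1 / (1 - q)) ^ (n - 1) * ∑ k ∈ range (n + 1), ∑ i ∈ range p,
          (n.choose k : ℚ_[p]) * (-1) ^ k * ((k : ℚ_[p]) + (h : ℚ_[p])) *
            (q ^ (h * ((a + i * p ^ N : ℕ) : ℤ)) * ξ ^ (a + i * p ^ N) *
              q ^ ((a + i * p ^ N) * k)) /
            (1 - (q ^ p ^ (N + 1)) ^ (h + (k : ℤ)) * ξ ^ p ^ (N + 1)) := by
        rw [show (∑ i ∈ range p, padicTwistedMu p q ξ h n (N + 1) (a + i * p ^ N))
            = ∑ i ∈ range p, ((1 / (1 - q)) ^ (n - 1) * ∑ k ∈ range (n + 1),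
              (n.choose k : ℚ_[p]) * (-1) ^ k * ((k : ℚ_[p]) + (h : ℚ_[p])) *
                (q ^ (h * ((a + i * p ^ N : ℕ) : ℤ)) * ξ ^ (a + i * p ^ N) *
                  q ^ ((a + i * p ^ N) * k)) /
                (1 - (q ^ p ^ (N + 1)) ^ (h + (k : ℤ)) * ξ ^ p ^ (N + 1)))
          from Finset.sum_congr rfl fun i _ =>
            padicTwistedMu_eq p q ξ h n (N + 1) (a + i * p ^ N) hQN1,
          ← Finset.mul_sum, Finset.sum_comm]
    _ = (1 / (1 - q)) ^ (n - 1) * ∑ k ∈ range (n + 1),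
          (n.choose k : ℚ_[p]) * (-1) ^ k * ((k : ℚ_[p]) + (h : ℚ_[p])) *
            (q ^ (h * (a : ℤ)) * ξ ^ a * q ^ (a * k)) /
            (1 - (q ^ p ^ N) ^ (h + (k : ℤ)) * ξ ^ p ^ N) := by
        congr 1
        refine Finset.sum_congr rfl fun k hk => ?_
        obtain ⟨hD, hDp⟩ := hden k (Nat.lt_succ_iff.mp (Finset.mem_range.mp hk))
        set z : ℚ_[p] := (q ^ p ^ N) ^ (h + (k : ℤ)) * ξ ^ p ^ N with hzdef
        have hzp : z ^ p = (q ^ p ^ (N + 1)) ^ (h + (k : ℤ)) * ξ ^ p ^ (N + 1) := by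
          rw [hzdef, mul_pow, ← pow_mul ξ, ← pow_succ]
          congr 1
          rw [← zpow_natCast ((q ^ p ^ N) ^ (h + (k : ℤ))) p, ← zpow_mul,
            mul_comm (h + (k : ℤ)) (p : ℤ), zpow_mul, zpow_natCast, ← pow_mul, ← pow_succ]
        have hnum : ∀ i : ℕ,
            q ^ (h * ((a + i * p ^ N : ℕ) : ℤ)) * ξ ^ (a + i * p ^ N) *
              q ^ ((a + i * p ^ N) * k)
            = (q ^ (h * (a : ℤ)) * ξ ^ a * q ^ (a * k)) * z ^ i := by
          intro i
          have e1 : q ^ (h * ((a + i * p ^ N : ℕ) : ℤ))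
              = q ^ (h * (a : ℤ)) * ((q ^ p ^ N) ^ h) ^ i := by
            rw [← zpow_natCast q (p ^ N), ← zpow_mul, ← zpow_natCast _ i, ← zpow_mul,
              ← zpow_add₀ hq0]
            congr 1
            push_cast
            ring
          have e2 : ξ ^ (a + i * p ^ N) = ξ ^ a * (ξ ^ p ^ N) ^ i := by
            rw [pow_add, ← pow_mul, mul_comm i]
          have e3 : q ^ ((a + i * p ^ N) * k) = q ^ (a * k) * ((q ^ p ^ N) ^ k) ^ i := by
            rw [← pow_mul, ← pow_mul, ← pow_add]
            congr 1
            ring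
          have e4 : z ^ i = ((q ^ p ^ N) ^ h) ^ i * ((q ^ p ^ N) ^ k) ^ i *
              (ξ ^ p ^ N) ^ i := by
            rw [hzdef, mul_pow, zpow_add₀ hqpN, zpow_natCast, mul_pow]
          rw [e1, e2, e3, e4]
          ring
        have hz1 : z ≠ 1 := by
          intro hzz
          exact hD (by rw [hzz, sub_self])
        have hz1' : z - 1 ≠ 0 := sub_ne_zero.mpr hz1
        have hDp' : (1:ℚ_[p]) - z ^ p ≠ 0 := by rw [hzp]; exact hDp
        calc ∑ i ∈ range p,
              (n.choose k : ℚ_[p]) * (-1) ^ k * ((k : ℚ_[p]) + (h : ℚ_[p])) *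
                (q ^ (h * ((a + i * p ^ N : ℕ) : ℤ)) * ξ ^ (a + i * p ^ N) *
                  q ^ ((a + i * p ^ N) * k)) /
                (1 - (q ^ p ^ (N + 1)) ^ (h + (k : ℤ)) * ξ ^ p ^ (N + 1))
            = ((n.choose k : ℚ_[p]) * (-1) ^ k * ((k : ℚ_[p]) + (h : ℚ_[p])) *
                (q ^ (h * (a : ℤ)) * ξ ^ a * q ^ (a * k)) / (1 - z ^ p)) *
                ∑ i ∈ range p, z ^ i := by
              rw [Finset.mul_sum]
              refine Finset.sum_congr rfl fun i _ => ?_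
              rw [hnum i, ← hzp]
              ring
          _ = _ := by
              rw [geom_sum_eq hz1, div_mul_div_comm,
                div_eq_div_iff (mul_ne_zero hDp' hz1') hD]
              ring
end
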